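/- Let H be a finite-dimensional complex Hilbert space, ρ a density operator on H ⊗ H, η = Σⱼ γⱼ τⱼ ⊗ τⱼ a separable density operator (γⱼ > 0, Σγⱼ = 1, τⱼ density operators on H), and A, B₁, B₂ self-adjoint with operator norms at most 1. Then |tr[ρ(A ⊗ B₁)] - tr[ρ(A ⊗ B₂)]| ≤ 1 + ‖ρ - η‖₁·‖B₁ - B₂‖ - Σⱼ γⱼ tr[τⱼB₁]·tr[τⱼB₂], where ‖·‖₁ is the trace norm. -/

import Mathlib

open Matrix
open scoped ComplexOrder Kronecker

/-- The operator norm (ℓ²→ℓ² norm) of a square complex matrix. -/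
noncomputable def opNorm {n : Type*} [Fintype n] [DecidableEq n] (A : Matrix n n ℂ) : ℝ :=
  ‖Matrix.toEuclideanCLM (𝕜 := ℂ) A‖

/-- The trace norm of a square complex matrix: the trace of √(AᴴA). -/
noncomputable def traceNorm {n : Type*} [Fintype n] [DecidableEq n] (A : Matrix n n ℂ) : ℝ :=
  ((((Matrix.posSemidef_conjTranspose_mul_self A).isHermitian.eigenvectorUnitary : Matrix n n ℂ) *
      diagonal (((↑) : ℝ → ℂ) ∘
        ((Matrix.posSemidef_conjTranspose_mul_self A).isHermitian.eigenvalues · |>.sqrt)) *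
      (star (Matrix.posSemidef_conjTranspose_mul_self A).isHermitian.eigenvectorUnitary :
        Matrix n n ℂ)).trace).re

/-!
Write `ρ = (ρ - η) + η`. Against `A ⊗ (B₁ - B₂)`, the first summand contributes at most
`‖ρ - η‖₁ ‖A ⊗ (B₁ - B₂)‖ ≤ ‖ρ - η‖₁ ‖B₁ - B₂‖` (Hölder's inequality for the trace, and
submultiplicativity of the operator norm on Kronecker products). The separable summand contributes
the classical average `∑ⱼ γⱼ aⱼ (b₁ⱼ - b₂ⱼ)` of the numbers `aⱼ = Re tr τⱼA`, `bᵢⱼ = tr τⱼBᵢ` in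
`[-1, 1]`, which Bell's elementary inequality `|a (b₁ - b₂)| ≤ 1 - b₁ b₂` bounds by
`1 - ∑ⱼ γⱼ b₁ⱼ b₂ⱼ`.
-/

open scoped Matrix.Norms.L2Operator

lemma abs_mul_sub_le_one_sub_mul {a b c : ℝ} (ha : |a| ≤ 1) (hb : |b| ≤ 1) (hc : |c| ≤ 1) :
    |a * (b - c)| ≤ 1 - b * c := by
  obtain ⟨hb₁, hb₂⟩ := abs_le.mp hb
  obtain ⟨hc₁, hc₂⟩ := abs_le.mp hc
  -- `1 - b c ∓ (b - c)` factor as `(1 ± c) (1 ∓ b)`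
  have hbc : |b - c| ≤ 1 - b * c := abs_le.mpr ⟨by nlinarith, by nlinarith⟩
  calc |a * (b - c)| = |a| * |b - c| := abs_mul a _
    _ ≤ 1 * |b - c| := by gcongr
    _ ≤ 1 - b * c := by rwa [one_mul]

lemma abs_sum_mul_sub_le_one_sub_sum {ι : Type*} {s : Finset ι} {γ a b c : ι → ℝ}
    (hγ : ∀ j ∈ s, 0 ≤ γ j) (hγsum : ∑ j ∈ s, γ j = 1) (ha : ∀ j ∈ s, |a j| ≤ 1)
    (hb : ∀ j ∈ s, |b j| ≤ 1) (hc : ∀ j ∈ s, |c j| ≤ 1) :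
    |∑ j ∈ s, γ j * (a j * (b j - c j))| ≤ 1 - ∑ j ∈ s, γ j * b j * c j :=
  calc |∑ j ∈ s, γ j * (a j * (b j - c j))| ≤ ∑ j ∈ s, |γ j * (a j * (b j - c j))| :=
        Finset.abs_sum_le_sum_abs _ _
    _ ≤ ∑ j ∈ s, γ j * (1 - b j * c j) := Finset.sum_le_sum fun j hj => by
        rw [abs_mul, abs_of_nonneg (hγ j hj)]
        exact mul_le_mul_of_nonneg_left
          (abs_mul_sub_le_one_sub_mul (ha j hj) (hb j hj) (hc j hj)) (hγ j hj)
    _ = 1 - ∑ j ∈ s, γ j * b j * c j := by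
        simp only [mul_sub, mul_one, Finset.sum_sub_distrib, hγsum, mul_assoc]

namespace Matrix

section L2OpNorm

variable {𝕜 : Type*} [RCLike 𝕜] {m n : Type*} [Fintype m] [Fintype n] [DecidableEq n]

lemma sum_norm_sq_mulVec_le (A : Matrix m n 𝕜) (v : n → 𝕜) :
    ∑ i, ‖(A *ᵥ v) i‖ ^ 2 ≤ ‖A‖ ^ 2 * ∑ j, ‖v j‖ ^ 2 := by
  have h := A.l2_opNorm_mulVec (WithLp.toLp 2 v)
  have h2 := pow_le_pow_left₀ (norm_nonneg _) h 2
  rw [mul_pow, EuclideanSpace.norm_sq_eq, EuclideanSpace.norm_sq_eq] at h2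
  simpa using h2

lemma l2_opNorm_le_of_sum_norm_sq_mulVec_le (A : Matrix m n 𝕜) {c : ℝ} (hc : 0 ≤ c)
    (h : ∀ v : n → 𝕜, ∑ i, ‖(A *ᵥ v) i‖ ^ 2 ≤ c ^ 2 * ∑ j, ‖v j‖ ^ 2) : ‖A‖ ≤ c := by
  rw [l2_opNorm_def]
  refine ContinuousLinearMap.opNorm_le_bound _ hc fun x => ?_
  refine pow_le_pow_iff_left₀ (norm_nonneg _) (by positivity) two_ne_zero |>.mp ?_
  rw [mul_pow, EuclideanSpace.norm_sq_eq, EuclideanSpace.norm_sq_eq]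
  simpa using h x.ofLp

lemma norm_apply_le_l2_opNorm (X : Matrix m n 𝕜) (i : m) (j : n) :
    ‖X i j‖ ≤ ‖X‖ := by
  have h := X.l2_opNorm_mulVec (EuclideanSpace.single j 1)
  rw [EuclideanSpace.single, PiLp.norm_single, norm_one, mul_one] at h
  refine le_trans ?_ h
  simpa [mulVec_single_one] using
    PiLp.norm_apply_le ((EuclideanSpace.equiv m 𝕜).symm (X *ᵥ EuclideanSpace.single j 1)) i

variable [DecidableEq m]

lemma IsHermitian.norm_trace_mul_le_sum_abs_eigenvalues_mul {M : Matrix m m 𝕜}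
    (hM : M.IsHermitian) (X : Matrix m m 𝕜) :
    ‖(M * X).trace‖ ≤ (∑ i, |hM.eigenvalues i|) * ‖X‖ := by
  set U := hM.eigenvectorUnitary
  have htr : (M * X).trace =
      ∑ i, (hM.eigenvalues i : 𝕜) * (star (U : Matrix m m 𝕜) * X * U) i i := by
    conv_lhs => rw [hM.spectral_theorem, Unitary.conjStarAlgAut_apply]
    rw [mul_assoc, mul_assoc, trace_mul_comm, mul_assoc, ← mul_assoc, mul_assoc (diagonal _)]
    simp only [trace, diag_apply, diagonal_mul, Function.comp_apply]
    rfl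
  rw [htr, Finset.sum_mul]
  refine (norm_sum_le _ _).trans (Finset.sum_le_sum fun i _ => ?_)
  rw [norm_mul, RCLike.norm_ofReal]
  gcongr
  calc ‖(star (U : Matrix m m 𝕜) * X * U) i i‖ ≤ ‖star (U : Matrix m m 𝕜) * X * U‖ :=
        norm_apply_le_l2_opNorm _ _ _
    _ = ‖X‖ := by
        rw [← Unitary.coe_star, CStarRing.norm_mul_coe_unitary, CStarRing.norm_coe_unitary_mul]

variable {p q : Type*} [Fintype p] [DecidableEq p] [Fintype q] [DecidableEq q]

lemma l2_opNorm_kronecker_one_le (A : Matrix p p 𝕜) : ‖A ⊗ₖ (1 : Matrix q q 𝕜)‖ ≤ ‖A‖ := by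
  refine l2_opNorm_le_of_sum_norm_sq_mulVec_le _ (norm_nonneg A) fun w => ?_
  have hmul : ∀ i j, ((A ⊗ₖ (1 : Matrix q q 𝕜)) *ᵥ w) (i, j) = (A *ᵥ fun k => w (k, j)) i := by
    intro i j
    simp [mulVec, dotProduct, Fintype.sum_prod_type, one_apply]
  calc ∑ x, ‖((A ⊗ₖ (1 : Matrix q q 𝕜)) *ᵥ w) x‖ ^ 2
      = ∑ j, ∑ i, ‖(A *ᵥ fun k => w (k, j)) i‖ ^ 2 := by
        simp only [Fintype.sum_prod_type, hmul]; exact Finset.sum_comm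
    _ ≤ ∑ j, ‖A‖ ^ 2 * ∑ k, ‖w (k, j)‖ ^ 2 :=
        Finset.sum_le_sum fun j _ => sum_norm_sq_mulVec_le A _
    _ = ‖A‖ ^ 2 * ∑ x, ‖w x‖ ^ 2 := by
        rw [← Finset.mul_sum, Fintype.sum_prod_type, Finset.sum_comm]

lemma l2_opNorm_one_kronecker_le (B : Matrix q q 𝕜) : ‖(1 : Matrix p p 𝕜) ⊗ₖ B‖ ≤ ‖B‖ := by
  refine l2_opNorm_le_of_sum_norm_sq_mulVec_le _ (norm_nonneg B) fun w => ?_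
  have hmul : ∀ i j, (((1 : Matrix p p 𝕜) ⊗ₖ B) *ᵥ w) (i, j) = (B *ᵥ fun l => w (i, l)) j := by
    intro i j
    simp [mulVec, dotProduct, Fintype.sum_prod_type, one_apply]
  calc ∑ x, ‖(((1 : Matrix p p 𝕜) ⊗ₖ B) *ᵥ w) x‖ ^ 2
      = ∑ i, ∑ j, ‖(B *ᵥ fun l => w (i, l)) j‖ ^ 2 := by
        simp only [Fintype.sum_prod_type, hmul]
    _ ≤ ∑ i, ‖B‖ ^ 2 * ∑ l, ‖w (i, l)‖ ^ 2 :=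
        Finset.sum_le_sum fun i _ => sum_norm_sq_mulVec_le B _
    _ = ‖B‖ ^ 2 * ∑ x, ‖w x‖ ^ 2 := by
        rw [← Finset.mul_sum, Fintype.sum_prod_type]

lemma l2_opNorm_kronecker_le (A : Matrix p p 𝕜) (B : Matrix q q 𝕜) : ‖A ⊗ₖ B‖ ≤ ‖A‖ * ‖B‖ :=
  calc ‖A ⊗ₖ B‖ = ‖(A ⊗ₖ (1 : Matrix q q 𝕜)) * ((1 : Matrix p p 𝕜) ⊗ₖ B)‖ := by
        rw [← mul_kronecker_mul, mul_one, one_mul]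
    _ ≤ ‖A‖ * ‖B‖ := (l2_opNorm_mul _ _).trans <|
        mul_le_mul (l2_opNorm_kronecker_one_le A) (l2_opNorm_one_kronecker_le B)
          (norm_nonneg _) (norm_nonneg _)

end L2OpNorm

variable {m : Type*} [Fintype m]

lemma IsHermitian.coe_re_trace_mul {S T : Matrix m m ℂ} (hS : S.IsHermitian) (hT : T.IsHermitian) :
    (((S * T).trace).re : ℂ) = (S * T).trace := by
  rw [← Complex.conj_eq_iff_re, ← Complex.star_def, ← trace_conjTranspose, conjTranspose_mul,
    hS.eq, hT.eq, trace_mul_comm]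

lemma kronecker_sub {R p q : Type*} [Ring R] (A : Matrix p p R) (B₁ B₂ : Matrix q q R) :
    A ⊗ₖ (B₁ - B₂) = A ⊗ₖ B₁ - A ⊗ₖ B₂ := by
  ext
  simp [mul_sub]

lemma trace_sum_smul_kronecker_mul_kronecker {R ι p q : Type*} [CommRing R] [Fintype ι]
    [Fintype p] [Fintype q] (c : ι → R) (σ : ι → Matrix p p R) (τ : ι → Matrix q q R)
    (A : Matrix p p R) (B : Matrix q q R) :
    ((∑ j, c j • (σ j ⊗ₖ τ j)) * (A ⊗ₖ B)).trace =
      ∑ j, c j * ((σ j * A).trace * (τ j * B).trace) := by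
  simp only [Finset.sum_mul, trace_sum, smul_mul, trace_smul, ← mul_kronecker_mul,
    trace_kronecker, smul_eq_mul]

lemma re_trace_separable_mul_kronecker_sub {ι : Type*} [Fintype ι] (γ : ι → ℝ)
    {τ : ι → Matrix m m ℂ} (hτ : ∀ j, (τ j).IsHermitian) (A : Matrix m m ℂ)
    {B₁ B₂ : Matrix m m ℂ} (hB₁ : B₁.IsHermitian) (hB₂ : B₂.IsHermitian) :
    (((∑ j, (γ j : ℂ) • (τ j ⊗ₖ τ j)) * (A ⊗ₖ (B₁ - B₂))).trace).re =
      ∑ j, γ j * (((τ j * A).trace).re * (((τ j * B₁).trace).re - ((τ j * B₂).trace).re)) := by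
  rw [trace_sum_smul_kronecker_mul_kronecker, Complex.re_sum]
  refine Finset.sum_congr rfl fun j _ => ?_
  rw [Matrix.mul_sub, trace_sub, ← (hτ j).coe_re_trace_mul hB₁, ← (hτ j).coe_re_trace_mul hB₂,
    ← Complex.ofReal_sub, Complex.re_ofReal_mul, Complex.re_mul_ofReal, Complex.ofReal_re,
    Complex.ofReal_re]

variable [DecidableEq m]

lemma opNorm_eq_l2_opNorm (A : Matrix m m ℂ) : opNorm A = ‖A‖ := rfl

lemma IsHermitian.traceNorm_eq {M : Matrix m m ℂ} (hM : M.IsHermitian) :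
    traceNorm M = ∑ i, |hM.eigenvalues i| := by
  have hMM := (posSemidef_conjTranspose_mul_self M).isHermitian
  have hsqrt : traceNorm M = ((cfc Real.sqrt (Mᴴ * M)).trace).re := by
    rw [IsHermitian.cfc_eq hMM, IsHermitian.cfc, Unitary.conjStarAlgAut_apply]
    rfl
  have habs : cfc Real.sqrt (Mᴴ * M) = cfc (fun x : ℝ => |x|) M := by
    have hsq : cfc (fun x : ℝ => x * x) M = Mᴴ * M := by
      rw [cfc_mul (fun x : ℝ => x) (fun x : ℝ => x) M, cfc_id' ℝ M, hM.eq]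
    rw [← hsq, ← cfc_comp' Real.sqrt (fun x : ℝ => x * x) M]
    exact cfc_congr fun x _ => Real.sqrt_mul_self_eq_abs x
  rw [hsqrt, habs, IsHermitian.cfc_eq hM, IsHermitian.cfc, Unitary.conjStarAlgAut_apply,
    trace_mul_cycle, mem_unitaryGroup_iff'.mp hM.eigenvectorUnitary.2, one_mul, trace_diagonal]
  simp [Complex.re_sum]

lemma PosSemidef.traceNorm_eq {M : Matrix m m ℂ} (hM : M.PosSemidef) :
    traceNorm M = M.trace.re := by
  rw [hM.1.traceNorm_eq, hM.1.trace_eq_sum_eigenvalues, Complex.re_sum]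
  exact Finset.sum_congr rfl fun i _ => by simp [abs_of_nonneg (hM.eigenvalues_nonneg i)]

lemma IsHermitian.traceNorm_nonneg {M : Matrix m m ℂ} (hM : M.IsHermitian) : 0 ≤ traceNorm M :=
  hM.traceNorm_eq ▸ Finset.sum_nonneg fun _ _ => abs_nonneg _

lemma IsHermitian.norm_trace_mul_le {M : Matrix m m ℂ} (hM : M.IsHermitian) (X : Matrix m m ℂ) :
    ‖(M * X).trace‖ ≤ traceNorm M * opNorm X := by
  rw [hM.traceNorm_eq, opNorm_eq_l2_opNorm]
  exact hM.norm_trace_mul_le_sum_abs_eigenvalues_mul X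

lemma PosSemidef.abs_re_trace_mul_le_one {T : Matrix m m ℂ} (hT : T.PosSemidef)
    (htr : T.trace = 1) {X : Matrix m m ℂ} (hX : opNorm X ≤ 1) : |((T * X).trace).re| ≤ 1 := by
  refine (Complex.abs_re_le_norm _).trans ((hT.1.norm_trace_mul_le X).trans ?_)
  simpa [hT.traceNorm_eq, htr] using hX

lemma IsHermitian.abs_re_trace_mul_kronecker_le {p q : Type*} [Fintype p] [DecidableEq p]
    [Fintype q] [DecidableEq q] {M : Matrix (p × q) (p × q) ℂ} (hM : M.IsHermitian)
    {A : Matrix p p ℂ} (hA : opNorm A ≤ 1) (B : Matrix q q ℂ) :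
    |((M * (A ⊗ₖ B)).trace).re| ≤ traceNorm M * opNorm B :=
  calc |((M * (A ⊗ₖ B)).trace).re| ≤ traceNorm M * opNorm (A ⊗ₖ B) :=
        (Complex.abs_re_le_norm _).trans (hM.norm_trace_mul_le _)
    _ ≤ traceNorm M * (1 * opNorm B) := by
        gcongr
        · exact hM.traceNorm_nonneg
        · exact (l2_opNorm_kronecker_le A B).trans (mul_le_mul_of_nonneg_right hA (norm_nonneg B))
    _ = traceNorm M * opNorm B := by rw [one_mul]

end Matrix

theorem quantum_analog_bell_inequality_general {n N : ℕ}
    (A B₁ B₂ : Matrix (Fin n) (Fin n) ℂ)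
    (hB₁ : B₁.IsHermitian) (hB₂ : B₂.IsHermitian)
    (hAn : opNorm A ≤ 1) (hB₁n : opNorm B₁ ≤ 1) (hB₂n : opNorm B₂ ≤ 1)
    (γ : Fin N → ℝ) (hγpos : ∀ j, 0 < γ j) (hγsum : ∑ j, γ j = 1)
    (τ : Fin N → Matrix (Fin n) (Fin n) ℂ)
    (hτ : ∀ j, (τ j).PosSemidef) (hτtr : ∀ j, (τ j).trace = 1)
    (ρ : Matrix (Fin n × Fin n) (Fin n × Fin n) ℂ)
    (hρ : ρ.PosSemidef)
    (η : Matrix (Fin n × Fin n) (Fin n × Fin n) ℂ)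
    (hη : η = ∑ j, (γ j : ℂ) • (τ j ⊗ₖ τ j)) :
    |((ρ * (A ⊗ₖ B₁)).trace).re - ((ρ * (A ⊗ₖ B₂)).trace).re| ≤
      1 + traceNorm (ρ - η) * opNorm (B₁ - B₂) -
        ∑ j, γ j * ((τ j * B₁).trace).re * ((τ j * B₂).trace).re := by
  have hη_herm : η.IsHermitian := hη ▸ (posSemidef_sum Finset.univ fun j _ =>
    ((hτ j).kronecker (hτ j)).smul (Complex.zero_le_real.mpr (hγpos j).le)).1
  have hsplit : ((ρ * (A ⊗ₖ B₁)).trace).re - ((ρ * (A ⊗ₖ B₂)).trace).re =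
      (((ρ - η) * (A ⊗ₖ (B₁ - B₂))).trace).re + ((η * (A ⊗ₖ (B₁ - B₂))).trace).re := by
    simp only [kronecker_sub, Matrix.sub_mul, Matrix.mul_sub, trace_sub, Complex.sub_re]
    ring
  have hsep := re_trace_separable_mul_kronecker_sub γ (fun j => (hτ j).1) A hB₁ hB₂
  have hdist := (hρ.1.sub hη_herm).abs_re_trace_mul_kronecker_le hAn (B₁ - B₂)
  have hbell := abs_sum_mul_sub_le_one_sub_sum (s := Finset.univ) (fun j _ => (hγpos j).le) hγsum
    (fun j _ => (hτ j).abs_re_trace_mul_le_one (hτtr j) hAn)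
    (fun j _ => (hτ j).abs_re_trace_mul_le_one (hτtr j) hB₁n)
    (fun j _ => (hτ j).abs_re_trace_mul_le_one (hτtr j) hB₂n)
  rw [← hη] at hsep
  rw [hsplit, hsep]
  exact (abs_add_le _ _).trans (by linarith)

theorem quantum_analog_bell_inequality {n N : ℕ}
    (A B₁ B₂ : Matrix (Fin n) (Fin n) ℂ)
    (hA : A.IsHermitian) (hB₁ : B₁.IsHermitian) (hB₂ : B₂.IsHermitian)
    (hAn : opNorm A ≤ 1) (hB₁n : opNorm B₁ ≤ 1) (hB₂n : opNorm B₂ ≤ 1)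
    (γ : Fin N → ℝ) (hγpos : ∀ j, 0 < γ j) (hγsum : ∑ j, γ j = 1)
    (τ : Fin N → Matrix (Fin n) (Fin n) ℂ)
    (hτ : ∀ j, (τ j).PosSemidef) (hτtr : ∀ j, (τ j).trace = 1)
    (ρ : Matrix (Fin n × Fin n) (Fin n × Fin n) ℂ)
    (hρ : ρ.PosSemidef) (hρtr : ρ.trace = 1)
    (η : Matrix (Fin n × Fin n) (Fin n × Fin n) ℂ)
    (hη : η = ∑ j, (γ j : ℂ) • (τ j ⊗ₖ τ j)) :
    |((ρ * (A ⊗ₖ B₁)).trace).re - ((ρ * (A ⊗ₖ B₂)).trace).re| ≤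
      1 + traceNorm (ρ - η) * opNorm (B₁ - B₂) -
        ∑ j, γ j * ((τ j * B₁).trace).re * ((τ j * B₂).trace).re :=
  quantum_analog_bell_inequality_general A B₁ B₂ hB₁ hB₂ hAn hB₁n hB₂n γ hγpos hγsum τ hτ hτtr ρ hρ
    η hη
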